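/- arXiv:0907.1905 — 5 statements merged into one kernel-verified Lean document; each statement's English description precedes it below -/
import Mathlib

section
/- Let A be a category with finite limits and a projective class P, P⋆ → A a P-projective precubical resolution, and s_i : P_n → P_{n+1} (n ≥ 0, 1 ≤ i ≤ n+1) any pseudodegeneracy operators of P⋆. Then there exist pseudoconnections: morphisms Γ_i : P_n → P_{n+1} (n ≥ 1, 1 ≤ i ≤ n) satisfying ∂_i^α Γ_j = Γ_{j−1} ∂_i^α for i < j (α ∈ {0,1}); ∂_i^0 Γ_j = id for i = j, j+1; ∂_i^1 Γ_j = s_j ∂_j^1 for i = j, j+1; and ∂_i^α Γ_j = Γ_j ∂_{i−1}^α for i > j+1 (α ∈ {0,1}). Consequently, any P-projective precubical resolution is an augmented pseudocubical object with pseudoconnections. -/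
open CategoryTheory CategoryTheory.Limits
universe v u

/-- A precubical object in a category `C`. `d n i ε : X (n+1) ⟶ X n` is the face
`∂_i^ε` for `1 ≤ i ≤ n+1`; values outside this range are junk. -/
structure Precub (C : Type u) [Category.{v} C] where
  X : ℕ → C
  d : ∀ n : ℕ, ℕ → Bool → (X (n + 1) ⟶ X n)
  dd : ∀ (n i j : ℕ) (α ε : Bool), 1 ≤ i → i < j → j ≤ n + 2 →
    d (n + 1) j ε ≫ d n i α = d (n + 1) i α ≫ d n (j - 1) ε

/-- `f` is `P`-epimorphic. -/
def PEpi {C : Type u} [Category.{v} C] (P : C → Prop) {A B : C} (f : A ⟶ B) : Prop :=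
  ∀ Q : C, P Q → ∀ g : Q ⟶ B, ∃ h : Q ⟶ A, h ≫ f = g

/-- `P` is a projective class. -/
def IsProjectiveClass {C : Type u} [Category.{v} C] (P : C → Prop) : Prop :=
  ∀ A : C, ∃ (Q : C) (e : Q ⟶ A), P Q ∧ PEpi P e

/-- The canonical factorization data of an augmented precubical object `X → A`:
`K 0` is the kernel pair of the augmentation, and `K (n+1)` is the cubical kernel of the
faces `∂_1^0, …, ∂_{n+1}^0, ∂_1^1, …, ∂_{n+1}^1 : X_{n+1} ⟶ X_n`, with
`e n : X_{n+1} ⟶ K n` the canonical morphism. -/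
structure KernelData {C : Type u} [Category.{v} C] (X : Precub C) {A : C}
    (aug : X.X 0 ⟶ A) where
  K : ℕ → C
  k : ∀ n : ℕ, ℕ → Bool → (K n ⟶ X.X n)
  e : ∀ n : ℕ, X.X (n + 1) ⟶ K n
  pair_w : k 0 1 false ≫ aug = k 0 1 true ≫ aug
  pair_univ : ∀ {D : C} (h₀ h₁ : D ⟶ X.X 0), h₀ ≫ aug = h₁ ≫ aug →
    ∃! l : D ⟶ K 0, l ≫ k 0 1 false = h₀ ∧ l ≫ k 0 1 true = h₁
  ck_w : ∀ (n i j : ℕ) (ω α : Bool), 1 ≤ i → i < j → j ≤ n + 2 →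
    k (n + 1) j α ≫ X.d n i ω = k (n + 1) i ω ≫ X.d n (j - 1) α
  ck_univ : ∀ (n : ℕ) {D : C} (h : ℕ → Bool → (D ⟶ X.X (n + 1))),
    (∀ (i j : ℕ) (ω α : Bool), 1 ≤ i → i < j → j ≤ n + 2 →
      h j α ≫ X.d n i ω = h i ω ≫ X.d n (j - 1) α) →
    ∃! l : D ⟶ K (n + 1), ∀ (i : ℕ) (ω : Bool), 1 ≤ i → i ≤ n + 2 →
      l ≫ k (n + 1) i ω = h i ω
  e_k : ∀ (n i : ℕ) (ε : Bool), 1 ≤ i → i ≤ n + 1 → e n ≫ k n i ε = X.d n i ε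

/-!
The pseudoconnections are built one level at a time. Once `Γ` is known on `X_n`, the axioms
prescribe every face `Γ_j ≫ ∂_i^ε` of the wanted `Γ_j : X_{n+1} ⟶ X_{n+2}` in terms of faces of
`X`, the `s_j` and the `Γ` one level down. Using the cubical identities for `X` and `s`, and the
axioms already satisfied one level down, these faces satisfy the cubical identities, so they
form a morphism `X_{n+1} ⟶ K_{n+1}` into the cubical kernel. As `X_{n+1} ∈ P` and
`e_{n+1} : X_{n+2} ⟶ K_{n+1}` is `P`-epimorphic, it lifts along `e_{n+1}`; the lift is `Γ_j`.
-/

theorem exists_dependent_seq {T : ℕ → Type*} (R : ∀ n, T n → T (n + 1) → Prop) {a : T 0}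
    {b : T 1} (hab : R 0 a b) (step : ∀ n a b, R n a b → ∃ c, R (n + 1) b c) :
    ∃ f : ∀ n, T n, ∀ n, R n (f n) (f (n + 1)) := by
  choose next hnext using step
  let g : ∀ n, {p : T n × T (n + 1) // R n p.1 p.2} := fun n =>
    Nat.rec ⟨(a, b), hab⟩ (fun n p => ⟨(p.1.2, next n p.1.1 p.1.2 p.2), hnext n _ _ p.2⟩) n
  exact ⟨fun n => (g n).1.1, fun n => (g n).2⟩

namespace Precub

section Definitions

variable {C : Type u} [Category.{v} C] (X : Precub C) (s : ∀ n : ℕ, ℕ → (X.X n ⟶ X.X (n + 1)))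

structure IsPseudodegeneracy : Prop where
  comp_d_of_lt : ∀ (n i j : ℕ) (α : Bool), 1 ≤ i → i < j → j ≤ n + 2 →
    s (n + 1) j ≫ X.d (n + 1) i α = X.d n i α ≫ s n (j - 1)
  comp_d_self : ∀ (n i : ℕ) (α : Bool), 1 ≤ i → i ≤ n + 1 → s n i ≫ X.d n i α = 𝟙 (X.X n)
  comp_d_of_gt : ∀ (n i j : ℕ) (α : Bool), 1 ≤ j → j < i → i ≤ n + 2 →
    s (n + 1) j ≫ X.d (n + 1) i α = X.d n (i - 1) α ≫ s n j

/-- A morphism into the cubical kernel `K (n+1)`, given by its faces. -/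
def IsShell (n : ℕ) {D : C} (h : ℕ → Bool → (D ⟶ X.X (n + 1))) : Prop :=
  ∀ (i j : ℕ) (ω α : Bool), 1 ≤ i → i < j → j ≤ n + 2 →
    h j α ≫ X.d n i ω = h i ω ≫ X.d n (j - 1) α

/-- The face `Γ_j ≫ ∂_i^ε` of `Γ_j : X_{n+1} ⟶ X_{n+2}` prescribed by the pseudoconnection
axioms when `Γ` is the family one level down. -/
def connFace (n j i : ℕ) (ε : Bool) (Γ : ℕ → (X.X n ⟶ X.X (n + 1))) :
    X.X (n + 1) ⟶ X.X (n + 1) :=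
  if i < j then X.d n i ε ≫ Γ (j - 1)
  else if i ≤ j + 1 then (if ε then X.d n j true ≫ s n j else 𝟙 _)
  else X.d n (i - 1) ε ≫ Γ j

def IsPseudoconnOver (n : ℕ) (Γ : ℕ → (X.X n ⟶ X.X (n + 1)))
    (Γ' : ℕ → (X.X (n + 1) ⟶ X.X (n + 2))) : Prop :=
  ∀ j, 1 ≤ j → j ≤ n + 1 → ∀ i ε, 1 ≤ i → i ≤ n + 2 →
    Γ' j ≫ X.d (n + 1) i ε = X.connFace s n j i ε Γ

end Definitions

variable {C : Type u} [Category.{v} C] {X : Precub C} {s : ∀ n : ℕ, ℕ → (X.X n ⟶ X.X (n + 1))}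
  {n i j : ℕ} {Γ : ℕ → (X.X n ⟶ X.X (n + 1))}

theorem connFace_of_lt (h : i < j) (ε : Bool) :
    X.connFace s n j i ε Γ = X.d n i ε ≫ Γ (j - 1) := if_pos h

theorem connFace_false (h₁ : j ≤ i) (h₂ : i ≤ j + 1) :
    X.connFace s n j i false Γ = 𝟙 _ := by
  simp only [connFace, if_neg (show ¬i < j by omega), if_pos h₂, Bool.false_eq_true,
    ite_false]

theorem connFace_true (h₁ : j ≤ i) (h₂ : i ≤ j + 1) :
    X.connFace s n j i true Γ = X.d n j true ≫ s n j := by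
  simp only [connFace, if_neg (show ¬i < j by omega), if_pos h₂, ite_true]

theorem connFace_of_gt (h : j + 1 < i) (ε : Bool) :
    X.connFace s n j i ε Γ = X.d n (i - 1) ε ≫ Γ j := by
  simp only [connFace, if_neg (show ¬i < j by omega), if_neg (show ¬i ≤ j + 1 by omega)]

theorem IsPseudodegeneracy.connFace_comp_d_self (hs : X.IsPseudodegeneracy s)
    (hj₁ : 1 ≤ j) (hj₂ : j ≤ n + 1) (ω α : Bool) :
    X.connFace s n j (j + 1) α Γ ≫ X.d n j ω = X.connFace s n j j ω Γ ≫ X.d n j α := by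
  have hself := fun ε => hs.comp_d_self n j ε hj₁ hj₂
  cases α <;> cases ω <;>
    simp (disch := omega) only [connFace_false, connFace_true, Category.assoc, hself,
      Category.id_comp, Category.comp_id]

theorem IsPseudodegeneracy.isShell_connFace_zero (hs : X.IsPseudodegeneracy s)
    (Γ : ℕ → (X.X 0 ⟶ X.X 1)) (hj₁ : 1 ≤ j) (hj₂ : j ≤ 1) :
    X.IsShell 0 (fun i ε => X.connFace s 0 j i ε Γ) := by
  intro i i' ω α hi hii' hi'
  obtain rfl : j = 1 := by omega
  obtain rfl : i = 1 := by omega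
  obtain rfl : i' = 2 := by omega
  exact hs.connFace_comp_d_self le_rfl le_rfl ω α

namespace IsPseudoconnOver

variable {Γ' : ℕ → (X.X (n + 1) ⟶ X.X (n + 2))} (hΓ : X.IsPseudoconnOver s n Γ Γ')
include hΓ

theorem comp_d_of_lt (hi : 1 ≤ i) (hij : i < j) (hj : j ≤ n + 1) (ε : Bool) :
    Γ' j ≫ X.d (n + 1) i ε = X.d n i ε ≫ Γ (j - 1) :=
  (hΓ j (by omega) hj i ε hi (by omega)).trans (connFace_of_lt hij ε)

theorem comp_d_false (hj₁ : 1 ≤ j) (hj₂ : j ≤ n + 1) (hi₁ : j ≤ i) (hi₂ : i ≤ j + 1) :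
    Γ' j ≫ X.d (n + 1) i false = 𝟙 _ :=
  (hΓ j hj₁ hj₂ i false (by omega) (by omega)).trans (connFace_false hi₁ hi₂)

theorem comp_d_true (hj₁ : 1 ≤ j) (hj₂ : j ≤ n + 1) (hi₁ : j ≤ i) (hi₂ : i ≤ j + 1) :
    Γ' j ≫ X.d (n + 1) i true = X.d n j true ≫ s n j :=
  (hΓ j hj₁ hj₂ i true (by omega) (by omega)).trans (connFace_true hi₁ hi₂)

theorem comp_d_of_gt (hj₁ : 1 ≤ j) (hj₂ : j ≤ n + 1) (hij : j + 1 < i) (hi : i ≤ n + 2)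
    (ε : Bool) : Γ' j ≫ X.d (n + 1) i ε = X.d n (i - 1) ε ≫ Γ j :=
  (hΓ j hj₁ hj₂ i ε (by omega) hi).trans (connFace_of_gt hij ε)

theorem isShell_connFace (hs : X.IsPseudodegeneracy s) (hj₁ : 1 ≤ j) (hj₂ : j ≤ n + 2) :
    X.IsShell (n + 1) (fun i ε => X.connFace s (n + 1) j i ε Γ') := by
  intro i i' ω α hi hii' hi'
  dsimp only
  rcases lt_or_ge i' j with hi'j | hji'
  · simp (disch := omega) only [connFace_of_lt, Category.assoc, hΓ.comp_d_of_lt]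
    simp only [← Category.assoc, X.dd n i i' ω α hi hii' (by omega)]
  rcases lt_or_ge i j with hij | hji
  · rcases le_or_gt i' (j + 1) with hi'j | hji'
    · cases α
      · simp (disch := omega) only [connFace_false, connFace_of_lt, Category.assoc,
          hΓ.comp_d_false, Category.id_comp, Category.comp_id]
      · simp (disch := omega) only [connFace_true, connFace_of_lt, Category.assoc,
          hΓ.comp_d_true, hs.comp_d_of_lt]
        simp only [← Category.assoc, X.dd n i j ω true hi hij (by omega)]
    · simp (disch := omega) only [connFace_of_gt, connFace_of_lt, Category.assoc,
        hΓ.comp_d_of_lt, hΓ.comp_d_of_gt]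
      simp only [← Category.assoc, X.dd n i (i' - 1) ω α hi (by omega) (by omega)]
  rcases le_or_gt i' (j + 1) with hi'j | hji'
  · obtain rfl : i = j := by omega
    obtain rfl : i' = i + 1 := by omega
    exact hs.connFace_comp_d_self hi (by omega) ω α
  rcases le_or_gt i (j + 1) with hij | hji
  · cases ω
    · simp (disch := omega) only [connFace_false, connFace_of_gt, Category.assoc,
        hΓ.comp_d_false, Category.id_comp, Category.comp_id]
    · simp (disch := omega) only [connFace_true, connFace_of_gt, Category.assoc,
        hΓ.comp_d_true, hs.comp_d_of_gt]
      simp only [← Category.assoc, X.dd n j (i' - 1) true α hj₁ (by omega) (by omega)]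
  · simp (disch := omega) only [connFace_of_gt, Category.assoc, hΓ.comp_d_of_gt]
    simp only [← Category.assoc, X.dd n (i - 1) (i' - 1) ω α (by omega) (by omega) (by omega)]

end IsPseudoconnOver

end Precub

namespace KernelData

variable {C : Type u} [Category.{v} C] {P : C → Prop} {X : Precub C} {A : C}
  {aug : X.X 0 ⟶ A} (KD : KernelData X aug) {n : ℕ}

theorem exists_comp_d_eq_of_isShell (he : PEpi P (KD.e (n + 1))) {D : C} (hD : P D)
    {h : ℕ → Bool → (D ⟶ X.X (n + 1))} (hh : X.IsShell n h) :
    ∃ g : D ⟶ X.X (n + 2), ∀ i ε, 1 ≤ i → i ≤ n + 2 → g ≫ X.d (n + 1) i ε = h i ε := by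
  obtain ⟨l, hl, -⟩ := KD.ck_univ n h hh
  obtain ⟨g, hg⟩ := he D hD l
  refine ⟨g, fun i ε hi₁ hi₂ => ?_⟩
  rw [← KD.e_k (n + 1) i ε hi₁ hi₂, ← Category.assoc, hg, hl i ε hi₁ hi₂]

theorem exists_isPseudoconnOver (s : ∀ n : ℕ, ℕ → (X.X n ⟶ X.X (n + 1)))
    (hX : P (X.X (n + 1))) (he : PEpi P (KD.e (n + 1))) (Γ : ℕ → (X.X n ⟶ X.X (n + 1)))
    (hΓ : ∀ j, 1 ≤ j → j ≤ n + 1 → X.IsShell n (fun i ε => X.connFace s n j i ε Γ)) :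
    ∃ Γ', X.IsPseudoconnOver s n Γ Γ' := by
  have hfill : ∀ j, ∃ g : X.X (n + 1) ⟶ X.X (n + 2), 1 ≤ j → j ≤ n + 1 →
      ∀ i ε, 1 ≤ i → i ≤ n + 2 → g ≫ X.d (n + 1) i ε = X.connFace s n j i ε Γ := by
    intro j
    by_cases hj : 1 ≤ j ∧ j ≤ n + 1
    · obtain ⟨g, hg⟩ := KD.exists_comp_d_eq_of_isShell he hX (hΓ j hj.1 hj.2)
      exact ⟨g, fun _ _ => hg⟩
    · exact ⟨s (n + 1) 1, fun hj₁ hj₂ => absurd ⟨hj₁, hj₂⟩ hj⟩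
  choose Γ' hΓ' using hfill
  exact ⟨Γ', hΓ'⟩

end KernelData

theorem stmt12_general {C : Type u} [Category.{v} C] (P : C → Prop)
    (X : Precub C) {A : C} (aug : X.X 0 ⟶ A)
    (KD : KernelData X aug)
    (hproj : ∀ n, P (X.X n))
    (hexact : PEpi P aug ∧ ∀ n, PEpi P (KD.e n))
    (s : ∀ n : ℕ, ℕ → (X.X n ⟶ X.X (n + 1)))
    (hs_lt : ∀ (n i j : ℕ) (α : Bool), 1 ≤ i → i < j → j ≤ n + 2 →
      s (n + 1) j ≫ X.d (n + 1) i α = X.d n i α ≫ s n (j - 1))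
    (hs_eq : ∀ (n i : ℕ) (α : Bool), 1 ≤ i → i ≤ n + 1 → s n i ≫ X.d n i α = 𝟙 (X.X n))
    (hs_gt : ∀ (n i j : ℕ) (α : Bool), 1 ≤ j → j < i → i ≤ n + 2 →
      s (n + 1) j ≫ X.d (n + 1) i α = X.d n (i - 1) α ≫ s n j) :
    ∃ Γ : ∀ n : ℕ, ℕ → (X.X (n + 1) ⟶ X.X (n + 2)),
      (∀ (n i j : ℕ) (α : Bool), 1 ≤ i → i < j → j ≤ n + 2 →
        Γ (n + 1) j ≫ X.d (n + 2) i α = X.d (n + 1) i α ≫ Γ n (j - 1)) ∧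
      (∀ (n j : ℕ), 1 ≤ j → j ≤ n + 1 →
        Γ n j ≫ X.d (n + 1) j false = 𝟙 (X.X (n + 1)) ∧
        Γ n j ≫ X.d (n + 1) (j + 1) false = 𝟙 (X.X (n + 1))) ∧
      (∀ (n j : ℕ), 1 ≤ j → j ≤ n + 1 →
        Γ n j ≫ X.d (n + 1) j true = X.d n j true ≫ s n j ∧
        Γ n j ≫ X.d (n + 1) (j + 1) true = X.d n j true ≫ s n j) ∧
      (∀ (n i j : ℕ) (α : Bool), 1 ≤ j → j + 1 < i → i ≤ n + 3 →
        Γ (n + 1) j ≫ X.d (n + 2) i α = X.d (n + 1) (i - 1) α ≫ Γ n j) := by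
  obtain ⟨-, he⟩ := hexact
  have hs : X.IsPseudodegeneracy s := ⟨hs_lt, hs_eq, hs_gt⟩
  -- level 0 only involves the faces `i = j, j + 1`, so the family below it is irrelevant
  obtain ⟨Γ₀, hΓ₀⟩ := KD.exists_isPseudoconnOver s (hproj 1) (he 1) (fun _ => s 0 1)
    (fun _ => hs.isShell_connFace_zero _)
  obtain ⟨Γ, hΓ⟩ := exists_dependent_seq (X.IsPseudoconnOver s) hΓ₀ fun n _ Γ' h =>
    KD.exists_isPseudoconnOver s (hproj _) (he _) Γ' (fun _ => h.isShell_connFace hs)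
  refine ⟨fun n => Γ (n + 1), ?_, ?_, ?_, ?_⟩
  · intro n i j α hi hij hj
    exact (hΓ (n + 1)).comp_d_of_lt hi hij hj α
  · intro n j hj₁ hj₂
    exact ⟨(hΓ n).comp_d_false hj₁ hj₂ le_rfl (by omega),
      (hΓ n).comp_d_false hj₁ hj₂ (by omega) le_rfl⟩
  · intro n j hj₁ hj₂
    exact ⟨(hΓ n).comp_d_true hj₁ hj₂ le_rfl (by omega),
      (hΓ n).comp_d_true hj₁ hj₂ (by omega) le_rfl⟩
  · intro n i j α hj₁ hji hi
    exact (hΓ (n + 1)).comp_d_of_gt hj₁ (by omega) hji hi α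

theorem stmt12 {C : Type u} [Category.{v} C] [HasFiniteLimits C] (P : C → Prop)
    (hP : IsProjectiveClass P)
    (X : Precub C) {A : C} (aug : X.X 0 ⟶ A)
    (haug : X.d 0 1 false ≫ aug = X.d 0 1 true ≫ aug)
    (KD : KernelData X aug)
    (hproj : ∀ n, P (X.X n))
    (hexact : PEpi P aug ∧ ∀ n, PEpi P (KD.e n))
    (s : ∀ n : ℕ, ℕ → (X.X n ⟶ X.X (n + 1)))
    (hs_lt : ∀ (n i j : ℕ) (α : Bool), 1 ≤ i → i < j → j ≤ n + 2 →
      s (n + 1) j ≫ X.d (n + 1) i α = X.d n i α ≫ s n (j - 1))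
    (hs_eq : ∀ (n i : ℕ) (α : Bool), 1 ≤ i → i ≤ n + 1 → s n i ≫ X.d n i α = 𝟙 (X.X n))
    (hs_gt : ∀ (n i j : ℕ) (α : Bool), 1 ≤ j → j < i → i ≤ n + 2 →
      s (n + 1) j ≫ X.d (n + 1) i α = X.d n (i - 1) α ≫ s n j) :
    ∃ Γ : ∀ n : ℕ, ℕ → (X.X (n + 1) ⟶ X.X (n + 2)),
      (∀ (n i j : ℕ) (α : Bool), 1 ≤ i → i < j → j ≤ n + 2 →
        Γ (n + 1) j ≫ X.d (n + 2) i α = X.d (n + 1) i α ≫ Γ n (j - 1)) ∧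
      (∀ (n j : ℕ), 1 ≤ j → j ≤ n + 1 →
        Γ n j ≫ X.d (n + 1) j false = 𝟙 (X.X (n + 1)) ∧
        Γ n j ≫ X.d (n + 1) (j + 1) false = 𝟙 (X.X (n + 1))) ∧
      (∀ (n j : ℕ), 1 ≤ j → j ≤ n + 1 →
        Γ n j ≫ X.d (n + 1) j true = X.d n j true ≫ s n j ∧
        Γ n j ≫ X.d (n + 1) (j + 1) true = X.d n j true ≫ s n j) ∧
      (∀ (n i j : ℕ) (α : Bool), 1 ≤ j → j + 1 < i → i ≤ n + 3 →
        Γ (n + 1) j ≫ X.d (n + 2) i α = X.d (n + 1) (i - 1) α ≫ Γ n j) :=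
  stmt12_general P X aug KD hproj hexact s hs_lt hs_eq hs_gt
end

section
/- Let X be a pseudocubical object and Y a precubical object in an abelian category A, and let f, g : X → Y be precubical morphisms. If f and g are precubically homotopic, then the induced chain maps N(f), N(g) : N(X) → N(Y) are chain homotopic. -/
open CategoryTheory CategoryTheory.Limits

universe v u

/-- A pseudocubical object: a precubical object with pseudodegeneracies. -/
structure Pseudocub (C : Type u) [Category.{v} C] extends Precub C where
  s : ∀ n : ℕ, ℕ → (X n ⟶ X (n + 1))
  ds_lt : ∀ (n i j : ℕ) (α : Bool), 1 ≤ i → i < j → j ≤ n + 2 →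
    s (n + 1) j ≫ d (n + 1) i α = d n i α ≫ s n (j - 1)
  ds_eq : ∀ (n i : ℕ) (α : Bool), 1 ≤ i → i ≤ n + 1 → s n i ≫ d n i α = 𝟙 (X n)
  ds_gt : ∀ (n i j : ℕ) (α : Bool), 1 ≤ j → j < i → i ≤ n + 2 →
    s (n + 1) j ≫ d (n + 1) i α = d n (i - 1) α ≫ s n j

/-- A pseudocubical object with pseudoconnections. -/
structure PseudocubConn (C : Type u) [Category.{v} C] extends Pseudocub C where
  conn : ∀ n : ℕ, ℕ → (X (n + 1) ⟶ X (n + 2))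
  dconn_lt : ∀ (n i j : ℕ) (α : Bool), 1 ≤ i → i < j → j ≤ n + 2 →
    conn (n + 1) j ≫ d (n + 2) i α = d (n + 1) i α ≫ conn n (j - 1)
  dconn_eq_zero : ∀ (n j : ℕ), 1 ≤ j → j ≤ n + 1 →
    conn n j ≫ d (n + 1) j false = 𝟙 (X (n + 1)) ∧
    conn n j ≫ d (n + 1) (j + 1) false = 𝟙 (X (n + 1))
  dconn_eq_one : ∀ (n j : ℕ), 1 ≤ j → j ≤ n + 1 →
    conn n j ≫ d (n + 1) j true = d n j true ≫ s n j ∧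
    conn n j ≫ d (n + 1) (j + 1) true = d n j true ≫ s n j
  dconn_gt : ∀ (n i j : ℕ) (α : Bool), 1 ≤ j → j + 1 < i → i ≤ n + 3 →
    conn (n + 1) j ≫ d (n + 2) i α = d (n + 1) (i - 1) α ≫ conn n j

/-- Data exhibiting `K` as the normalized chain complex `N(X)` of a precubical object `X`
in an abelian category: `K_n` is the intersection of the kernels of the faces `∂_i^1`
with differential the (restricted) alternating sum `Σ (-1)^(i+1) ∂_i^0`. -/
structure NormalizedData {C : Type u} [Category.{v} C] [Abelian C] (X : Precub C) where
  K : ChainComplex C ℕ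
  ι : ∀ n, K.X n ⟶ X.X n
  ι_mono : ∀ n, Mono (ι n)
  ι_ker : ∀ (n i : ℕ), 1 ≤ i → i ≤ n + 1 → ι (n + 1) ≫ X.d n i true = 0
  ι_lift : ∀ (n : ℕ) {W : C} (g : W ⟶ X.X (n + 1)),
    (∀ i, 1 ≤ i → i ≤ n + 1 → g ≫ X.d n i true = 0) →
    ∃ l : W ⟶ K.X (n + 1), l ≫ ι (n + 1) = g
  ι_lift₀ : ∀ {W : C} (g : W ⟶ X.X 0), ∃ l : W ⟶ K.X 0, l ≫ ι 0 = g
  diff : ∀ n : ℕ, K.d (n + 1) n ≫ ι n =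
    ι (n + 1) ≫ ∑ i ∈ Finset.Icc 1 (n + 1), ((-1 : ℤ) ^ (i + 1)) • X.d n i false

/-- Data exhibiting `K` as the Moore chain complex `M(X)` of a precubical object `X`
in an abelian category. -/
structure MooreData {C : Type u} [Category.{v} C] [Abelian C] (X : Precub C) where
  K : ChainComplex C ℕ
  ι : ∀ n, K.X n ⟶ X.X n
  ι_mono : ∀ n, Mono (ι n)
  ι_ker_one : ∀ (n i : ℕ), 1 ≤ i → i ≤ n + 1 → ι (n + 1) ≫ X.d n i true = 0
  ι_ker_zero : ∀ (n i : ℕ), 1 ≤ i → i ≤ n → ι (n + 1) ≫ X.d n i false = 0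
  ι_lift : ∀ (n : ℕ) {W : C} (g : W ⟶ X.X (n + 1)),
    (∀ i, 1 ≤ i → i ≤ n + 1 → g ≫ X.d n i true = 0) →
    (∀ i, 1 ≤ i → i ≤ n → g ≫ X.d n i false = 0) →
    ∃ l : W ⟶ K.X (n + 1), l ≫ ι (n + 1) = g
  ι_lift₀ : ∀ {W : C} (g : W ⟶ X.X 0), ∃ l : W ⟶ K.X 0, l ≫ ι 0 = g
  diff : ∀ n : ℕ, K.d (n + 1) n ≫ ι n =
    ι (n + 1) ≫ (((-1 : ℤ) ^ (n + 2)) • X.d n (n + 1) false)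

theorem stmt13 {C : Type u} [Category.{v} C] [Abelian C]
    (X : Pseudocub C) (Y : Precub C)
    (f g : ∀ n, X.X n ⟶ Y.X n)
    (hf : ∀ (n i : ℕ) (ε : Bool), 1 ≤ i → i ≤ n + 1 →
      f (n + 1) ≫ Y.d n i ε = X.d n i ε ≫ f n)
    (hg : ∀ (n i : ℕ) (ε : Bool), 1 ≤ i → i ≤ n + 1 →
      g (n + 1) ≫ Y.d n i ε = X.d n i ε ≫ g n)
    (h : ∀ n, X.X n ⟶ Y.X (n + 1))
    (hh₀ : ∀ n, h n ≫ Y.d n 1 false = f n ∧ h n ≫ Y.d n 1 true = g n)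
    (hh : ∀ (n i : ℕ) (ε : Bool), 2 ≤ i → i ≤ n + 2 →
      h (n + 1) ≫ Y.d (n + 1) i ε = X.d n (i - 1) ε ≫ h n)
    (NX : NormalizedData X.toPrecub) (NY : NormalizedData Y)
    (Nf Ng : NX.K ⟶ NY.K)
    (hNf : ∀ n, Nf.f n ≫ NY.ι n = NX.ι n ≫ f n)
    (hNg : ∀ n, Ng.f n ≫ NY.ι n = NX.ι n ≫ g n) :
    Nonempty (Homotopy Nf Ng) := by
  classical
  set k : ∀ n, X.X n ⟶ Y.X (n + 1) := fun n => h n - X.s n 1 ≫ g (n + 1) with hkdef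
  have k_d1_true : ∀ n, k n ≫ Y.d n 1 true = 0 := by
    intro n
    have h2 : (X.s n 1 ≫ g (n + 1)) ≫ Y.d n 1 true = g n := by
      rw [Category.assoc, hg n 1 true le_rfl (by omega), ← Category.assoc,
        X.ds_eq n 1 true le_rfl (by omega), Category.id_comp]
    simp [hkdef, Preadditive.sub_comp, (hh₀ n).2, h2]
  have k_d1_false : ∀ n, k n ≫ Y.d n 1 false = f n - g n := by
    intro n
    have h2 : (X.s n 1 ≫ g (n + 1)) ≫ Y.d n 1 false = g n := by
      rw [Category.assoc, hg n 1 false le_rfl (by omega), ← Category.assoc,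
        X.ds_eq n 1 false le_rfl (by omega), Category.id_comp]
    simp [hkdef, Preadditive.sub_comp, (hh₀ n).1, h2]
  have k_d_hi : ∀ (m i : ℕ) (ε : Bool), 2 ≤ i → i ≤ m + 2 →
      k (m + 1) ≫ Y.d (m + 1) i ε = X.d m (i - 1) ε ≫ k m := by
    intro m i ε h2 hle
    have h1 : h (m + 1) ≫ Y.d (m + 1) i ε = X.d m (i - 1) ε ≫ h m := hh m i ε h2 hle
    have hs : (X.s (m + 1) 1 ≫ g (m + 2)) ≫ Y.d (m + 1) i ε
        = X.d m (i - 1) ε ≫ (X.s m 1 ≫ g (m + 1)) := by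
      rw [Category.assoc, hg (m + 1) i ε (by omega) (by omega), ← Category.assoc,
        X.ds_gt m i 1 ε le_rfl (by omega) (by omega), Category.assoc]
    simp [hkdef, Preadditive.sub_comp, Preadditive.comp_sub, h1, hs]
  have hker : ∀ n, ∀ i, 1 ≤ i → i ≤ n + 1 → (NX.ι n ≫ k n) ≫ Y.d n i true = 0 := by
    intro n i h1 h2
    rcases eq_or_lt_of_le h1 with h1' | h1'
    · rw [Category.assoc, ← h1', k_d1_true, comp_zero]
    · obtain ⟨m, rfl⟩ : ∃ m, n = m + 1 := ⟨n - 1, by omega⟩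
      rw [Category.assoc, k_d_hi m i true (by omega) (by omega), ← Category.assoc,
        NX.ι_ker m (i - 1) (by omega) (by omega), zero_comp]
  choose H hH using fun n => NY.ι_lift n (NX.ι n ≫ k n) (hker n)
  -- rewrite the alternating sums over `range`
  have Dsum : ∀ (Z : Precub C) (n : ℕ),
      (∑ i ∈ Finset.Icc 1 (n + 1), ((-1 : ℤ) ^ (i + 1)) • Z.d n i false)
        = ∑ i ∈ Finset.range (n + 1), ((-1 : ℤ) ^ i) • Z.d n (i + 1) false := by
    intro Z n
    rw [← Finset.Ico_add_one_right_eq_Icc, Finset.sum_Ico_eq_sum_range]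
    refine Finset.sum_congr (by congr 1 <;> omega) ?_
    intro i _
    rw [show (1 : ℕ) + i = i + 1 by omega]
    congr 1
    rw [pow_succ, pow_succ]
    ring
  have keyB : ∀ m, k (m + 1) ≫ (∑ i ∈ Finset.range (m + 2), ((-1 : ℤ) ^ i) • Y.d (m + 1) (i + 1) false)
      = (f (m + 1) - g (m + 1))
        - (∑ i ∈ Finset.range (m + 1), ((-1 : ℤ) ^ i) • X.d m (i + 1) false) ≫ k m := by
    intro m
    rw [Preadditive.comp_sum, Finset.sum_range_succ', Preadditive.sum_comp]
    simp only [Preadditive.comp_zsmul, Preadditive.zsmul_comp, pow_zero, one_smul,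
      Category.assoc]
    rw [k_d1_false (m + 1)]
    have : ∀ i ∈ Finset.range (m + 1),
        ((-1 : ℤ) ^ (i + 1)) • (k (m + 1) ≫ Y.d (m + 1) (i + 1 + 1) false)
          = -(((-1 : ℤ) ^ i) • (X.d m (i + 1) false ≫ k m)) := by
      intro i hi
      simp only [Finset.mem_range] at hi
      rw [k_d_hi m (i + 2) false (by omega) (by omega)]
      have : i + 2 - 1 = i + 1 := by omega
      rw [this, pow_succ]
      simp [mul_comm]
    rw [Finset.sum_congr rfl this, Finset.sum_neg_distrib]
    abel
  let hom : ∀ i j, NX.K.X i ⟶ NY.K.X j :=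
    fun i j => if e : i + 1 = j then H i ≫ eqToHom (congrArg NY.K.X e) else 0
  have homeq : ∀ i : ℕ, hom i (i + 1) = H i := by
    intro i; simp [hom]
  refine ⟨{ hom := hom,
            zero := fun i j w => dif_neg (by simpa using w),
            comm := fun n => ?_ }⟩
  have hmono := NY.ι_mono n
  rw [← cancel_mono (NY.ι n)]
  cases n with
  | zero =>
    rw [Homotopy.dNext_zero_chainComplex, Homotopy.prevD_chainComplex, homeq 0]
    rw [hNf 0, Preadditive.add_comp, Preadditive.add_comp, zero_comp, hNg 0,
      Category.assoc, NY.diff 0, Dsum Y 0, ← Category.assoc, hH 0]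
    rw [show (Finset.range 1) = {0} from rfl, Finset.sum_singleton]
    simp only [pow_zero, one_smul, Category.assoc, k_d1_false 0]
    simp [Preadditive.comp_sub]
  | succ m =>
    rw [Homotopy.dNext_succ_chainComplex, Homotopy.prevD_chainComplex, homeq m, homeq (m + 1),
      hNf (m + 1), Preadditive.add_comp, Preadditive.add_comp, hNg (m + 1)]
    simp only [Category.assoc]
    rw [NY.diff (m + 1), Dsum Y (m + 1), ← Category.assoc (H (m + 1)), hH (m + 1),
      Category.assoc, keyB m, hH m, ← Category.assoc (NX.K.d (m + 1) m), NX.diff m,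
      Dsum X.toPrecub m]
    simp only [Category.assoc, Preadditive.comp_sub]
    abel
end

section
/- Let X and Y be pseudocubical objects with pseudoconnections in an abelian category A, and let f, g : X → Y be precubical morphisms. If f and g are precubically homotopic, then the induced chain maps M(f), M(g) : M(X) → M(Y) are chain homotopic. -/
open CategoryTheory CategoryTheory.Limits

universe v u

/-!
Subtracting the degenerate homotopy `s₁ g` from `h` gives a precubical homotopy `k` from
`f - g` to `0`. Corrected by the connections, `θₙ = kₙ + Σⱼ (-1)ʲ Γⱼ (fₙ - gₙ)` sends `M(X)`
into `M(Y)`: on Moore elements the faces `∂ᵢ⁰` of `Γᵢ₋₁` and `Γᵢ` cancel in the alternating sum,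
and at `i = 1` the remaining `-(f - g)` cancels `∂₁⁰ k = f - g`. On the last face,
`∂⁰ₙ₊₂ θₙ₊₁ = (-1)ⁿ⁺¹ (f - g) + θₙ ∂⁰ₙ₊₁`, which with the signs of the Moore differential is the
chain homotopy identity.
-/

section Preadditive

variable {C : Type u} [Category.{v} C] [Preadditive C]

namespace Precub

def IsHom (X Y : Precub C) (f : ∀ n, X.X n ⟶ Y.X n) : Prop :=
  ∀ (n i : ℕ) (ε : Bool), 1 ≤ i → i ≤ n + 1 → f (n + 1) ≫ Y.d n i ε = X.d n i ε ≫ f n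

structure IsHomotopy (X Y : Precub C) (f g : ∀ n, X.X n ⟶ Y.X n)
    (h : ∀ n, X.X n ⟶ Y.X (n + 1)) : Prop where
  d_one_false : ∀ n, h n ≫ Y.d n 1 false = f n
  d_one_true : ∀ n, h n ≫ Y.d n 1 true = g n
  d_succ : ∀ (n i : ℕ) (ε : Bool), 2 ≤ i → i ≤ n + 2 →
    h (n + 1) ≫ Y.d (n + 1) i ε = X.d n (i - 1) ε ≫ h n

variable {X Y : Precub C}

lemma IsHom.sub {f g : ∀ n, X.X n ⟶ Y.X n} (hf : IsHom X Y f) (hg : IsHom X Y g) :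
    IsHom X Y (f - g) := by
  intro n i ε hi hi'
  simp only [Pi.sub_apply, Preadditive.sub_comp, Preadditive.comp_sub, hf n i ε hi hi',
    hg n i ε hi hi']

lemma IsHom.comp_d_eq_zero {φ : ∀ n, X.X n ⟶ Y.X n} (hφ : IsHom X Y φ) {W : C} {m k : ℕ}
    {ε : Bool} {z : W ⟶ X.X (m + 1)} (hk : 1 ≤ k) (hk' : k ≤ m + 1)
    (hz : z ≫ X.d m k ε = 0) : (z ≫ φ (m + 1)) ≫ Y.d m k ε = 0 := by
  rw [Category.assoc, hφ m k ε hk hk', ← Category.assoc, hz, zero_comp]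

end Precub

lemma Precub.IsHomotopy.sub_degeneracy {X : Precub C} {Y : Pseudocub C}
    {f g : ∀ n, X.X n ⟶ Y.X n} {h : ∀ n, X.X n ⟶ Y.X (n + 1)}
    (hh : Precub.IsHomotopy X Y.toPrecub f g h) (hg : Precub.IsHom X Y.toPrecub g) :
    Precub.IsHomotopy X Y.toPrecub (f - g) 0 (h - fun n => g n ≫ Y.s n 1) where
  d_one_false n := by
    simp only [Pi.sub_apply, Preadditive.sub_comp, hh.d_one_false, Category.assoc,
      Y.ds_eq n 1 false le_rfl (by omega), Category.comp_id]
  d_one_true n := by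
    simp only [Pi.sub_apply, Preadditive.sub_comp, hh.d_one_true, Category.assoc,
      Y.ds_eq n 1 true le_rfl (by omega), Category.comp_id, sub_self, Pi.zero_apply]
  d_succ n i ε hi hi' := by
    simp only [Pi.sub_apply, Preadditive.sub_comp, Preadditive.comp_sub, hh.d_succ n i ε hi hi',
      Category.assoc, Y.ds_gt n i 1 ε le_rfl hi hi']
    rw [← Category.assoc, hg n (i - 1) ε (by omega) (by omega), Category.assoc]

namespace PseudocubConn

section ConnSum

variable (Y : PseudocubConn C)

def connSum : ∀ n, Y.X n ⟶ Y.X (n + 1)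
  | 0 => 0
  | m + 1 => ∑ j ∈ Finset.Icc 1 (m + 1), ((-1 : ℤ) ^ j) • Y.conn m j

lemma connSum_d_top (m : ℕ) :
    Y.connSum (m + 1) ≫ Y.d (m + 1) (m + 2) false
      = ((-1 : ℤ) ^ (m + 1)) • 𝟙 (Y.X (m + 1)) + Y.d m (m + 1) false ≫ Y.connSum m := by
  rcases m with _ | n
  · simp [connSum, (Y.dconn_eq_zero 0 1 le_rfl le_rfl).2]
  · rw [connSum, Finset.sum_Icc_succ_top (by omega), Preadditive.add_comp, Preadditive.zsmul_comp,
      (Y.dconn_eq_zero (n + 1) (n + 2) (by omega) le_rfl).2, add_comm (_ ≫ _)]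
    congr 1
    simp only [connSum, Preadditive.sum_comp, Preadditive.comp_sum]
    refine Finset.sum_congr rfl fun j hj => ?_
    rw [Finset.mem_Icc] at hj
    rw [Preadditive.zsmul_comp, Preadditive.comp_zsmul,
      Y.dconn_gt n (n + 3) j false hj.1 (by omega) le_rfl]
    rfl

variable {W : C} {m : ℕ} {z : W ⟶ Y.X (m + 1)}

lemma comp_conn_d_true_eq_zero
    (hz : ∀ k, 1 ≤ k → k ≤ m + 1 → z ≫ Y.d m k true = 0)
    {i j : ℕ} (hj : 1 ≤ j) (hj' : j ≤ m + 1) (hi : 1 ≤ i) (hi' : i ≤ m + 2) :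
    z ≫ Y.conn m j ≫ Y.d (m + 1) i true = 0 := by
  obtain hij | rfl | rfl | hij : i < j ∨ i = j ∨ i = j + 1 ∨ j + 1 < i := by omega
  · obtain ⟨n, rfl⟩ : ∃ n, m = n + 1 := ⟨m - 1, by omega⟩
    rw [Y.dconn_lt n i j true hi hij (by omega), ← Category.assoc, hz i hi (by omega), zero_comp]
  · rw [(Y.dconn_eq_one m i hi (by omega)).1, ← Category.assoc, hz i hi (by omega), zero_comp]
  · rw [(Y.dconn_eq_one m j hj hj').2, ← Category.assoc, hz j hj hj', zero_comp]
  · obtain ⟨n, rfl⟩ : ∃ n, m = n + 1 := ⟨m - 1, by omega⟩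
    rw [Y.dconn_gt n i j true hj hij (by omega), ← Category.assoc,
      hz (i - 1) (by omega) (by omega), zero_comp]

lemma comp_conn_d_false (hz : ∀ k, 1 ≤ k → k ≤ m → z ≫ Y.d m k false = 0)
    {i j : ℕ} (hj : 1 ≤ j) (hj' : j ≤ m + 1) (hi : 1 ≤ i) (hi' : i ≤ m + 1) :
    z ≫ Y.conn m j ≫ Y.d (m + 1) i false = if i = j ∨ i = j + 1 then z else 0 := by
  obtain hij | rfl | rfl | hij : i < j ∨ i = j ∨ i = j + 1 ∨ j + 1 < i := by omega
  · obtain ⟨n, rfl⟩ : ∃ n, m = n + 1 := ⟨m - 1, by omega⟩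
    rw [if_neg (by omega), Y.dconn_lt n i j false hi hij (by omega), ← Category.assoc,
      hz i hi (by omega), zero_comp]
  · rw [if_pos (Or.inl rfl), (Y.dconn_eq_zero m i hi (by omega)).1, Category.comp_id]
  · rw [if_pos (Or.inr rfl), (Y.dconn_eq_zero m j hj hj').2, Category.comp_id]
  · obtain ⟨n, rfl⟩ : ∃ n, m = n + 1 := ⟨m - 1, by omega⟩
    rw [if_neg (by omega), Y.dconn_gt n i j false hj hij (by omega), ← Category.assoc,
      hz (i - 1) (by omega) (by omega), zero_comp]

lemma comp_connSum_d_true_eq_zero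
    (hz : ∀ k, 1 ≤ k → k ≤ m + 1 → z ≫ Y.d m k true = 0) {i : ℕ} (hi : 1 ≤ i) (hi' : i ≤ m + 2) :
    z ≫ Y.connSum (m + 1) ≫ Y.d (m + 1) i true = 0 := by
  simp only [connSum, Preadditive.sum_comp, Preadditive.comp_sum, Preadditive.zsmul_comp,
    Preadditive.comp_zsmul]
  refine Finset.sum_eq_zero fun j hj => ?_
  rw [Finset.mem_Icc] at hj
  rw [Y.comp_conn_d_true_eq_zero hz hj.1 hj.2 hi hi', smul_zero]

lemma comp_connSum_d_false (hz : ∀ k, 1 ≤ k → k ≤ m → z ≫ Y.d m k false = 0)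
    {i : ℕ} (hi : 1 ≤ i) (hi' : i ≤ m + 1) :
    z ≫ Y.connSum (m + 1) ≫ Y.d (m + 1) i false = if i = 1 then -z else 0 := by
  simp only [connSum, Preadditive.sum_comp, Preadditive.comp_sum, Preadditive.zsmul_comp,
    Preadditive.comp_zsmul]
  have hterm : ∀ j ∈ Finset.Icc 1 (m + 1),
      ((-1 : ℤ) ^ j) • (z ≫ Y.conn m j ≫ Y.d (m + 1) i false)
        = ((-1 : ℤ) ^ j) • if i = j ∨ i = j + 1 then z else 0 := fun j hj => by
    rw [Finset.mem_Icc] at hj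
    rw [Y.comp_conn_d_false hz hj.1 hj.2 hi hi']
  rw [Finset.sum_congr rfl hterm]
  split_ifs with h1
  · subst h1
    rw [Finset.sum_eq_single_of_mem 1 (by simp) fun j hj hj1 => by
      rw [Finset.mem_Icc] at hj
      rw [if_neg (by omega), smul_zero]]
    simp
  · rw [Finset.sum_eq_add_of_mem (i - 1) i (Finset.mem_Icc.2 ⟨by omega, by omega⟩)
      (Finset.mem_Icc.2 ⟨hi, hi'⟩) (by omega)
      fun j _ hj => by rw [if_neg (by omega), smul_zero]]
    obtain ⟨k, rfl⟩ : ∃ k, i = k + 1 := ⟨i - 1, by omega⟩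
    simp [pow_succ]

end ConnSum

section CorrectedHomotopy

variable {X : Precub C} (Y : PseudocubConn C) (φ : ∀ n, X.X n ⟶ Y.X n)
  (k : ∀ n, X.X n ⟶ Y.X (n + 1))

def correctedHomotopy (n : ℕ) : X.X n ⟶ Y.X (n + 1) :=
  k n + φ n ≫ Y.connSum n

variable {Y φ k} (hφ : Precub.IsHom X Y.toPrecub φ)
  (hk : Precub.IsHomotopy X Y.toPrecub φ 0 k)
include hk

lemma correctedHomotopy_zero_d_true : Y.correctedHomotopy φ k 0 ≫ Y.d 0 1 true = 0 := by
  simp [correctedHomotopy, connSum, hk.d_one_true]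

lemma correctedHomotopy_zero_d_false : Y.correctedHomotopy φ k 0 ≫ Y.d 0 1 false = φ 0 := by
  simp [correctedHomotopy, connSum, hk.d_one_false]

include hφ

lemma correctedHomotopy_d_top (m : ℕ) :
    Y.correctedHomotopy φ k (m + 1) ≫ Y.d (m + 1) (m + 2) false
      = ((-1 : ℤ) ^ (m + 1)) • φ (m + 1) + X.d m (m + 1) false ≫ Y.correctedHomotopy φ k m := by
  have hk_top : k (m + 1) ≫ Y.d (m + 1) (m + 2) false = X.d m (m + 1) false ≫ k m :=
    hk.d_succ m (m + 2) false (by omega) le_rfl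
  simp only [correctedHomotopy, Preadditive.add_comp, Category.assoc, Y.connSum_d_top,
    Preadditive.comp_add, Preadditive.comp_zsmul, Category.comp_id, hk_top]
  rw [← Category.assoc (φ (m + 1)), hφ m (m + 1) false (by omega) le_rfl, Category.assoc]
  abel

variable {W : C} {m : ℕ} {z : W ⟶ X.X (m + 1)}

lemma comp_correctedHomotopy_d_true_eq_zero
    (hz : ∀ l, 1 ≤ l → l ≤ m + 1 → z ≫ X.d m l true = 0) {i : ℕ} (hi : 1 ≤ i) (hi' : i ≤ m + 2) :
    z ≫ Y.correctedHomotopy φ k (m + 1) ≫ Y.d (m + 1) i true = 0 := by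
  have hconn : (z ≫ φ (m + 1)) ≫ Y.connSum (m + 1) ≫ Y.d (m + 1) i true = 0 :=
    Y.comp_connSum_d_true_eq_zero (fun l hl hl' => hφ.comp_d_eq_zero hl hl' (hz l hl hl')) hi hi'
  have hhom : z ≫ k (m + 1) ≫ Y.d (m + 1) i true = 0 := by
    obtain rfl | hi : i = 1 ∨ 2 ≤ i := by omega
    · simp [hk.d_one_true]
    · rw [hk.d_succ m i true hi hi', ← Category.assoc, hz (i - 1) (by omega) (by omega),
        zero_comp]
  simpa only [correctedHomotopy, Preadditive.add_comp, Preadditive.comp_add, hhom, zero_add,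
    Category.assoc] using hconn

lemma comp_correctedHomotopy_d_false_eq_zero
    (hz : ∀ l, 1 ≤ l → l ≤ m → z ≫ X.d m l false = 0) {i : ℕ} (hi : 1 ≤ i) (hi' : i ≤ m + 1) :
    z ≫ Y.correctedHomotopy φ k (m + 1) ≫ Y.d (m + 1) i false = 0 := by
  have hconn : (z ≫ φ (m + 1)) ≫ Y.connSum (m + 1) ≫ Y.d (m + 1) i false
      = if i = 1 then -(z ≫ φ (m + 1)) else 0 :=
    Y.comp_connSum_d_false
      (fun l hl hl' => hφ.comp_d_eq_zero hl (by omega) (hz l hl hl')) hi hi'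
  have hhom : z ≫ k (m + 1) ≫ Y.d (m + 1) i false = if i = 1 then z ≫ φ (m + 1) else 0 := by
    obtain rfl | hi : i = 1 ∨ 2 ≤ i := by omega
    · simp [hk.d_one_false]
    · rw [hk.d_succ m i false hi (by omega), ← Category.assoc, hz (i - 1) (by omega) (by omega),
        zero_comp, if_neg (by omega)]
  simp only [correctedHomotopy, Preadditive.add_comp, Preadditive.comp_add, Category.assoc]
    at hconn ⊢
  rw [hconn, hhom]
  split_ifs <;> simp

end CorrectedHomotopy

end PseudocubConn

end Preadditive

def Homotopy.mkOfSucc {V : Type*} [Category V] [Preadditive V] {P Q : ChainComplex V ℕ}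
    {φ ψ : P ⟶ Q} (T : ∀ n, P.X n ⟶ Q.X (n + 1))
    (comm_zero : φ.f 0 = T 0 ≫ Q.d 1 0 + ψ.f 0)
    (comm_succ : ∀ n, φ.f (n + 1) =
      P.d (n + 1) n ≫ T n + T (n + 1) ≫ Q.d (n + 2) (n + 1) + ψ.f (n + 1)) :
    Homotopy φ ψ where
  hom i j := if h : i + 1 = j then T i ≫ eqToHom (by rw [h]) else 0
  zero i j hij := dif_neg (by simpa using hij)
  comm
    | 0 => by
      rw [dNext_zero_chainComplex, prevD_chainComplex, dif_pos rfl, eqToHom_refl,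
        Category.comp_id, zero_add, comm_zero]
    | n + 1 => by
      rw [dNext_succ_chainComplex, prevD_chainComplex, dif_pos rfl, dif_pos rfl, eqToHom_refl,
        eqToHom_refl, Category.comp_id, Category.comp_id, comm_succ n]

section Abelian

variable {C : Type u} [Category.{v} C] [Abelian C]

namespace PseudocubConn

variable {X : Precub C} {Y : PseudocubConn C} {φ : ∀ n, X.X n ⟶ Y.X n}
  {k : ∀ n, X.X n ⟶ Y.X (n + 1)}

lemma exists_lift_correctedHomotopy (hφ : Precub.IsHom X Y.toPrecub φ)
    (hk : Precub.IsHomotopy X Y.toPrecub φ 0 k) (MX : MooreData X) (MY : MooreData Y.toPrecub)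
    (n : ℕ) :
    ∃ T : MX.K.X n ⟶ MY.K.X (n + 1), T ≫ MY.ι (n + 1) = MX.ι n ≫ Y.correctedHomotopy φ k n := by
  rcases n with _ | m
  · refine MY.ι_lift 0 _ (fun i hi hi' => ?_) (fun i hi hi' => by omega)
    obtain rfl : i = 1 := by omega
    rw [Category.assoc, correctedHomotopy_zero_d_true hk, comp_zero]
  · refine MY.ι_lift (m + 1) _ (fun i hi hi' => ?_) (fun i hi hi' => ?_) <;> rw [Category.assoc]
    · exact comp_correctedHomotopy_d_true_eq_zero hφ hk (MX.ι_ker_one m) hi hi'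
    · exact comp_correctedHomotopy_d_false_eq_zero hφ hk (MX.ι_ker_zero m) hi hi'

end PseudocubConn

def MooreData.homotopyOfLift {X Y : Precub C} {MX : MooreData X} {MY : MooreData Y}
    {Mf Mg : MX.K ⟶ MY.K} {f g : ∀ n, X.X n ⟶ Y.X n}
    (hMf : ∀ n, Mf.f n ≫ MY.ι n = MX.ι n ≫ f n) (hMg : ∀ n, Mg.f n ≫ MY.ι n = MX.ι n ≫ g n)
    (θ : ∀ n, X.X n ⟶ Y.X (n + 1)) (hθ_zero : θ 0 ≫ Y.d 0 1 false = f 0 - g 0)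
    (hθ_succ : ∀ m, θ (m + 1) ≫ Y.d (m + 1) (m + 2) false
      = ((-1 : ℤ) ^ (m + 1)) • (f (m + 1) - g (m + 1)) + X.d m (m + 1) false ≫ θ m)
    (T : ∀ n, MX.K.X n ⟶ MY.K.X (n + 1)) (hT : ∀ n, T n ≫ MY.ι (n + 1) = MX.ι n ≫ θ n) :
    Homotopy Mf Mg :=
  Homotopy.mkOfSucc T
    (by
      have := MY.ι_mono 0
      rw [← cancel_mono (MY.ι 0), hMf, Preadditive.add_comp, hMg, Category.assoc, MY.diff 0,
        reassoc_of% (hT 0)]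
      simp [hθ_zero, Preadditive.comp_sub])
    (fun m => by
      have := MY.ι_mono (m + 1)
      rw [← cancel_mono (MY.ι (m + 1)), hMf, Preadditive.add_comp, Preadditive.add_comp, hMg,
        Category.assoc, hT, reassoc_of% (MX.diff m), Category.assoc, MY.diff (m + 1),
        reassoc_of% (hT (m + 1))]
      simp only [Preadditive.comp_zsmul, Preadditive.zsmul_comp, hθ_succ,
        Preadditive.comp_add, smul_add, smul_smul, ← pow_add]
      have hsign : ((-1 : ℤ) ^ (m + 1 + 2 + (m + 1))) = 1 :=
        Even.neg_one_pow ⟨m + 2, by ring⟩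
      rw [hsign, one_smul, pow_succ (-1 : ℤ) (m + 2), mul_neg_one, neg_smul, Preadditive.comp_sub]
      abel)

end Abelian

theorem stmt14 {C : Type u} [Category.{v} C] [Abelian C]
    (X Y : PseudocubConn C)
    (f g : ∀ n, X.X n ⟶ Y.X n)
    (hf : ∀ (n i : ℕ) (ε : Bool), 1 ≤ i → i ≤ n + 1 →
      f (n + 1) ≫ Y.d n i ε = X.d n i ε ≫ f n)
    (hg : ∀ (n i : ℕ) (ε : Bool), 1 ≤ i → i ≤ n + 1 →
      g (n + 1) ≫ Y.d n i ε = X.d n i ε ≫ g n)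
    (h : ∀ n, X.X n ⟶ Y.X (n + 1))
    (hh₀ : ∀ n, h n ≫ Y.d n 1 false = f n ∧ h n ≫ Y.d n 1 true = g n)
    (hh : ∀ (n i : ℕ) (ε : Bool), 2 ≤ i → i ≤ n + 2 →
      h (n + 1) ≫ Y.d (n + 1) i ε = X.d n (i - 1) ε ≫ h n)
    (MX : MooreData X.toPrecub) (MY : MooreData Y.toPrecub)
    (Mf Mg : MX.K ⟶ MY.K)
    (hMf : ∀ n, Mf.f n ≫ MY.ι n = MX.ι n ≫ f n)
    (hMg : ∀ n, Mg.f n ≫ MY.ι n = MX.ι n ≫ g n) :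
    Nonempty (Homotopy Mf Mg) := by
  have hφ : Precub.IsHom X.toPrecub Y.toPrecub (f - g) := Precub.IsHom.sub hf hg
  have hk := Precub.IsHomotopy.sub_degeneracy (Y := Y.toPseudocub)
    ⟨fun n => (hh₀ n).1, fun n => (hh₀ n).2, hh⟩ hg
  choose T hT using PseudocubConn.exists_lift_correctedHomotopy hφ hk MX MY
  exact ⟨MooreData.homotopyOfLift hMf hMg _ (PseudocubConn.correctedHomotopy_zero_d_false hk)
    (PseudocubConn.correctedHomotopy_d_top hφ hk) T hT⟩
end

section
/- Let A be an abelian category with a projective class P and X → A an augmented precubical object in A. If X → A is P-exact, then its augmented Moore chain complex ⋯ → M_n(X) → M_{n−1}(X) → ⋯ → M_1(X) → M_0(X) → A → 0 (with differentials (−1)^{n+1}∂_n^0 and augmentation ∂) is P-exact in the sense of Eilenberg–Moore: for every Q ∈ P, the induced sequence of abelian groups ⋯ → Hom(Q, M_n(X)) → Hom(Q, M_{n−1}(X)) → ⋯ → Hom(Q, M_0(X)) → Hom(Q, A) → 0 is exact. -/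
open CategoryTheory CategoryTheory.Limits
universe v u

/-! The proof reads P-exactness as a filling condition: a morphism from `Q ∈ P` into the cubical
kernel `K_n` is a compatible family of faces, and it lifts along `e_n` to an `n`-cube with those
faces. A Moore cycle `x` of degree `n + 1` has all faces zero, so the family whose only nonzero face
is `∂_{n+2}^0 = x` is compatible; its filler lies in `M_{n+2}(X)` and is a preimage of `x` under the
differential, up to the sign `(-1)^{n+3}`. In degree `0` the kernel pair plays the role of the
cubical kernel. -/

theorem neg_one_pow_zsmul_eq_iff {M : Type*} [AddCommGroup M] (k : ℕ) (a b : M) :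
    ((-1 : ℤ) ^ k) • a = b ↔ a = ((-1 : ℤ) ^ k) • b := by
  have hinv : ∀ c : M, ((-1 : ℤ) ^ k) • ((-1 : ℤ) ^ k) • c = c := fun c => by
    rw [smul_smul, ← mul_pow, neg_one_mul, neg_neg, one_pow, one_smul]
  constructor <;> rintro rfl <;> rw [hinv]

namespace Precub

variable {C : Type u} [Category.{v} C] (X : Precub C)

def FacesCompatible {W : C} (n : ℕ) (h : ℕ → Bool → (W ⟶ X.X (n + 1))) : Prop :=
  ∀ (i j : ℕ) (ω α : Bool), 1 ≤ i → i < j → j ≤ n + 2 →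
    h j α ≫ X.d n i ω = h i ω ≫ X.d n (j - 1) α

variable [HasZeroMorphisms C]

def lastFaceFamily {W : C} (n : ℕ) (x : W ⟶ X.X (n + 1)) : ℕ → Bool → (W ⟶ X.X (n + 1)) :=
  fun i ω => if i = n + 2 ∧ ω = false then x else 0

theorem lastFaceFamily_facesCompatible {W : C} {n : ℕ} {x : W ⟶ X.X (n + 1)}
    (hx : ∀ i ω, 1 ≤ i → i ≤ n + 1 → x ≫ X.d n i ω = 0) :
    X.FacesCompatible n (X.lastFaceFamily n x) := by
  intro i j ω α hi hij hj
  have hi' : ¬(i = n + 2 ∧ ω = false) := fun h => by omega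
  simp only [lastFaceFamily, if_neg hi', zero_comp]
  split_ifs
  · exact hx i ω hi (by omega)
  · exact zero_comp

end Precub

namespace KernelData

variable {C : Type u} [Category.{v} C] {P : C → Prop} {X : Precub C} {A : C} {aug : X.X 0 ⟶ A}
  (KD : KernelData X aug) {Q : C}

theorem exists_filler_zero (he : PEpi P (KD.e 0)) (hQ : P Q) {x₀ x₁ : Q ⟶ X.X 0}
    (hx : x₀ ≫ aug = x₁ ≫ aug) :
    ∃ y : Q ⟶ X.X 1, y ≫ X.d 0 1 false = x₀ ∧ y ≫ X.d 0 1 true = x₁ := by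
  obtain ⟨m, ⟨hm₀, hm₁⟩, -⟩ := KD.pair_univ x₀ x₁ hx
  obtain ⟨y, hy⟩ := he Q hQ m
  refine ⟨y, ?_, ?_⟩
  · rw [← KD.e_k 0 1 false le_rfl le_rfl, ← Category.assoc, hy, hm₀]
  · rw [← KD.e_k 0 1 true le_rfl le_rfl, ← Category.assoc, hy, hm₁]

theorem exists_filler_succ {n : ℕ} (he : PEpi P (KD.e (n + 1))) (hQ : P Q)
    {h : ℕ → Bool → (Q ⟶ X.X (n + 1))} (hh : X.FacesCompatible n h) :
    ∃ y : Q ⟶ X.X (n + 2), ∀ i ω, 1 ≤ i → i ≤ n + 2 → y ≫ X.d (n + 1) i ω = h i ω := by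
  obtain ⟨m, hm, -⟩ := KD.ck_univ n h hh
  obtain ⟨y, hy⟩ := he Q hQ m
  exact ⟨y, fun i ω hi hin => by
    rw [← KD.e_k (n + 1) i ω hi hin, ← Category.assoc, hy, hm i ω hi hin]⟩

theorem exists_filler_lastFace [HasZeroMorphisms C] {n : ℕ} (he : PEpi P (KD.e (n + 1)))
    (hQ : P Q) {x : Q ⟶ X.X (n + 1)} (hx : ∀ i ω, 1 ≤ i → i ≤ n + 1 → x ≫ X.d n i ω = 0) :
    ∃ y : Q ⟶ X.X (n + 2), (∀ i, 1 ≤ i → i ≤ n + 2 → y ≫ X.d (n + 1) i true = 0) ∧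
      (∀ i, 1 ≤ i → i ≤ n + 1 → y ≫ X.d (n + 1) i false = 0) ∧
      y ≫ X.d (n + 1) (n + 2) false = x := by
  obtain ⟨y, hy⟩ := KD.exists_filler_succ he hQ (X.lastFaceFamily_facesCompatible hx)
  refine ⟨y, fun i hi hin => ?_, fun i hi hin => ?_, ?_⟩
  · simp [hy i true hi hin, Precub.lastFaceFamily]
  · rw [hy i false hi (by omega), Precub.lastFaceFamily, if_neg (by omega)]
  · simp [hy (n + 2) false (by omega) le_rfl, Precub.lastFaceFamily]

end KernelData

namespace MooreData

variable {C : Type u} [Category.{v} C] [Abelian C] {X : Precub C} (MD : MooreData X) {W : C}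

theorem comp_d_eq_iff (n : ℕ) (l : W ⟶ MD.K.X (n + 1)) (g : W ⟶ MD.K.X n) :
    l ≫ MD.K.d (n + 1) n = g ↔
      l ≫ MD.ι (n + 1) ≫ X.d n (n + 1) false = ((-1 : ℤ) ^ (n + 2)) • (g ≫ MD.ι n) := by
  have := MD.ι_mono n
  rw [← cancel_mono (MD.ι n), Category.assoc, MD.diff, Preadditive.comp_zsmul,
    Preadditive.comp_zsmul, neg_one_pow_zsmul_eq_iff]

theorem d_one_zero_comp_ι_comp_eq_zero {A : C} {aug : X.X 0 ⟶ A}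
    (haug : X.d 0 1 false ≫ aug = X.d 0 1 true ≫ aug) :
    MD.K.d 1 0 ≫ MD.ι 0 ≫ aug = 0 := by
  rw [reassoc_of% (MD.diff 0), Preadditive.zsmul_comp, haug, Preadditive.comp_zsmul,
    reassoc_of% (MD.ι_ker_one 0 1 le_rfl le_rfl), zero_comp, smul_zero]

theorem faces_eq_zero_of_comp_d_eq_zero {n : ℕ} {g : W ⟶ MD.K.X (n + 1)}
    (hg : g ≫ MD.K.d (n + 1) n = 0) :
    ∀ i ω, 1 ≤ i → i ≤ n + 1 → (g ≫ MD.ι (n + 1)) ≫ X.d n i ω = 0 := by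
  have hlast := (MD.comp_d_eq_iff n g 0).1 hg
  rw [zero_comp, smul_zero] at hlast
  rintro i (_ | _) hi hin
  · rcases (show i ≤ n ∨ i = n + 1 by omega) with hin | rfl
    · rw [Category.assoc, MD.ι_ker_zero n i hi hin, comp_zero]
    · rw [Category.assoc, hlast]
  · rw [Category.assoc, MD.ι_ker_one n i hi hin, comp_zero]

theorem exists_comp_d_eq_of_filler {n : ℕ} {g : W ⟶ MD.K.X n} {y : W ⟶ X.X (n + 1)}
    (hy₁ : ∀ i, 1 ≤ i → i ≤ n + 1 → y ≫ X.d n i true = 0)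
    (hy₀ : ∀ i, 1 ≤ i → i ≤ n → y ≫ X.d n i false = 0)
    (hy : y ≫ X.d n (n + 1) false = g ≫ MD.ι n) :
    ∃ l : W ⟶ MD.K.X (n + 1), l ≫ MD.K.d (n + 1) n = g := by
  obtain ⟨l, hl⟩ := MD.ι_lift n y hy₁ hy₀
  refine ⟨((-1 : ℤ) ^ (n + 2)) • l, (MD.comp_d_eq_iff n _ g).2 ?_⟩
  rw [Preadditive.zsmul_comp, ← Category.assoc, hl, hy]

end MooreData

theorem stmt15_general {C : Type u} [Category.{v} C] [Abelian C] (P : C → Prop)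
    (X : Precub C) {A : C} (aug : X.X 0 ⟶ A)
    (haug : X.d 0 1 false ≫ aug = X.d 0 1 true ≫ aug)
    (KD : KernelData X aug)
    (hexact : PEpi P aug ∧ ∀ n, PEpi P (KD.e n))
    (MD : MooreData X) :
    (MD.K.d 1 0 ≫ MD.ι 0 ≫ aug = 0) ∧
    ∀ Q : C, P Q →
      (∀ g : Q ⟶ A, ∃ l : Q ⟶ MD.K.X 0, l ≫ MD.ι 0 ≫ aug = g) ∧
      (∀ g : Q ⟶ MD.K.X 0, g ≫ MD.ι 0 ≫ aug = 0 →
        ∃ l : Q ⟶ MD.K.X 1, l ≫ MD.K.d 1 0 = g) ∧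
      (∀ (n : ℕ) (g : Q ⟶ MD.K.X (n + 1)), g ≫ MD.K.d (n + 1) n = 0 →
        ∃ l : Q ⟶ MD.K.X (n + 2), l ≫ MD.K.d (n + 2) (n + 1) = g) := by
  obtain ⟨haugP, heP⟩ := hexact
  refine ⟨MD.d_one_zero_comp_ι_comp_eq_zero haug, fun Q hQ => ⟨?_, ?_, ?_⟩⟩
  · intro g
    obtain ⟨x, hx⟩ := haugP Q hQ g
    obtain ⟨l, hl⟩ := MD.ι_lift₀ x
    exact ⟨l, by rw [← Category.assoc, hl, hx]⟩
  · intro g hg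
    obtain ⟨y, hy₀, hy₁⟩ := KD.exists_filler_zero (heP 0) hQ
      (x₀ := g ≫ MD.ι 0) (x₁ := 0) (by rw [Category.assoc, hg, zero_comp])
    refine MD.exists_comp_d_eq_of_filler (fun i hi hin => ?_) (fun i hi hin => by omega) hy₀
    rw [show i = 1 by omega, hy₁]
  · intro n g hg
    obtain ⟨y, hy₁, hy₀, hy⟩ :=
      KD.exists_filler_lastFace (heP (n + 1)) hQ (MD.faces_eq_zero_of_comp_d_eq_zero hg)
    exact MD.exists_comp_d_eq_of_filler hy₁ hy₀ hy

theorem stmt15 {C : Type u} [Category.{v} C] [Abelian C] (P : C → Prop)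
    (hP : IsProjectiveClass P)
    (X : Precub C) {A : C} (aug : X.X 0 ⟶ A)
    (haug : X.d 0 1 false ≫ aug = X.d 0 1 true ≫ aug)
    (KD : KernelData X aug)
    (hexact : PEpi P aug ∧ ∀ n, PEpi P (KD.e n))
    (MD : MooreData X) :
    (MD.K.d 1 0 ≫ MD.ι 0 ≫ aug = 0) ∧
    ∀ Q : C, P Q →
      (∀ g : Q ⟶ A, ∃ l : Q ⟶ MD.K.X 0, l ≫ MD.ι 0 ≫ aug = g) ∧
      (∀ g : Q ⟶ MD.K.X 0, g ≫ MD.ι 0 ≫ aug = 0 →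
        ∃ l : Q ⟶ MD.K.X 1, l ≫ MD.K.d 1 0 = g) ∧
      (∀ (n : ℕ) (g : Q ⟶ MD.K.X (n + 1)), g ≫ MD.K.d (n + 1) n = 0 →
        ∃ l : Q ⟶ MD.K.X (n + 2), l ≫ MD.K.d (n + 2) (n + 1) = g) :=
  stmt15_general P X aug haug KD hexact MD
end

section
/- Let A be an abelian category with a projective class P and X → A an augmented pseudocubical object with pseudoconnections in A. If X → A is P-exact, then the augmented chain complex N(X) → A (with augmentation ∂ : N_0(X) = X_0 → A) is P-exact in the sense of Eilenberg–Moore: for every Q ∈ P, the induced sequence ⋯ → Hom(Q, N_n(X)) → Hom(Q, N_{n−1}(X)) → ⋯ → Hom(Q, N_0(X)) → Hom(Q, A) → 0 is exact. -/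
open CategoryTheory CategoryTheory.Limits
universe v u

/-!
In degree `0`, a `Q`-point of `X_0` killed by the augmentation gives a point of the kernel pair
`K_0`, which lifts along `e_0` to a `1`-cube in `N_1(X)` with boundary the given point.

In higher degrees the pseudoconnections kill faces one at a time. If `a ∈ N_{n+1}(X)` is a cycle
with `∂_m^0 a = 0` for `m > k`, then `a Γ_k ∈ N_{n+2}(X)`, and `a - (-1)^k ∂(a Γ_k)` is a cycle
in `N` whose faces `∂_m^0` vanish for `m ≥ k`: since `∂_k^0 Γ_k = ∂_{k+1}^0 Γ_k = id`, the face
`∂_k^0 ∂(a Γ_k)` is `(-1)^k ∂_k^0 a` plus a partial alternating sum of faces of `a` that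
vanishes because `a` is a cycle. After `n + 1` steps the cycle differs by a boundary from one with
all faces zero; such an element, placed at `∂_1^0` with zeros elsewhere, is a compatible family
for the cubical kernel `K_{n+1}`, and lifting it along `e_{n+1}` gives a preimage under `∂`.
-/

lemma Finset.sum_Icc_one_add_sum_Ioc {M : Type*} [AddCommMonoid M] (f : ℕ → M) {m N : ℕ}
    (h : m ≤ N) :
    ∑ i ∈ Finset.Icc 1 m, f i + ∑ i ∈ Finset.Ioc m N, f i = ∑ i ∈ Finset.Icc 1 N, f i := by
  rw [show Finset.Icc 1 m = Finset.Ioc 0 m from Finset.Icc_add_one_left_eq_Ioc 0 m,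
    show Finset.Icc 1 N = Finset.Ioc 0 N from Finset.Icc_add_one_left_eq_Ioc 0 N]
  exact Finset.sum_Ioc_consecutive f m.zero_le h

namespace Precub

variable {C : Type u} [Category.{v} C] [Preadditive C] (X : Precub C)

def boundary (n : ℕ) : X.X (n + 1) ⟶ X.X n :=
  ∑ i ∈ Finset.Icc 1 (n + 1), ((-1 : ℤ) ^ (i + 1)) • X.d n i false

/-- `X.FacesVanishFrom true 1 a` says that `a` factors through `N(X)`. -/
def FacesVanishFrom {Q : C} {n : ℕ} (ε : Bool) (k : ℕ) (a : Q ⟶ X.X (n + 1)) : Prop :=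
  ∀ i, k ≤ i → i ≤ n + 1 → a ≫ X.d n i ε = 0

variable {X}

lemma boundary_zero : X.boundary 0 = X.d 0 1 false := by
  simp [boundary]

lemma comp_boundary {Q : C} {n : ℕ} (f : Q ⟶ X.X (n + 1)) :
    f ≫ X.boundary n
      = ∑ i ∈ Finset.Icc 1 (n + 1), ((-1 : ℤ) ^ (i + 1)) • (f ≫ X.d n i false) := by
  simp only [boundary, Preadditive.comp_sum, Preadditive.comp_zsmul]

lemma boundary_comp_boundary (n : ℕ) : X.boundary (n + 1) ≫ X.boundary n = 0 := by
  have expand : X.boundary (n + 1) ≫ X.boundary n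
      = ∑ p ∈ Finset.Icc 1 (n + 2) ×ˢ Finset.Icc 1 (n + 1),
          ((-1 : ℤ) ^ (p.1 + p.2)) • (X.d (n + 1) p.1 false ≫ X.d n p.2 false) := by
    rw [Finset.sum_product, boundary, Preadditive.sum_comp]
    refine Finset.sum_congr rfl fun i _ => ?_
    rw [Preadditive.zsmul_comp, comp_boundary, Finset.smul_sum]
    refine Finset.sum_congr rfl fun j _ => ?_
    rw [smul_smul, ← pow_add, show i + 1 + (j + 1) = i + j + 2 by omega, pow_add, neg_one_sq,
      mul_one]
  rw [expand]
  -- `d i ≫ d j = d (j + 1) ≫ d i` for `i ≤ j` pairs the terms off with opposite signs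
  refine Finset.sum_involution
    (fun p _ => if p.1 ≤ p.2 then (p.2 + 1, p.1) else (p.2, p.1 - 1)) ?_ ?_ ?_ ?_
  · rintro ⟨i, j⟩ hp
    simp only [Finset.mem_product, Finset.mem_Icc] at hp
    by_cases hij : i ≤ j
    · simp only [hij, if_true]
      rw [X.dd n i (j + 1) false false hp.1.1 (by omega) (by omega), Nat.add_sub_cancel,
        show j + 1 + i = i + j + 1 by omega, pow_succ]
      simp
    · obtain ⟨i, rfl⟩ : ∃ i', i = i' + 1 := ⟨i - 1, by omega⟩
      simp only [hij, if_false, Nat.add_sub_cancel]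
      rw [X.dd n j (i + 1) false false hp.2.1 (by omega) (by omega), Nat.add_sub_cancel,
        show i + 1 + j = j + i + 1 by omega, pow_succ]
      simp
  · rintro ⟨i, j⟩ _ _
    split_ifs <;> simp only [ne_eq, Prod.mk.injEq] <;> omega
  · rintro ⟨i, j⟩ hp
    simp only [Finset.mem_product, Finset.mem_Icc] at hp ⊢
    split_ifs <;> omega
  · rintro ⟨i, j⟩ hp
    simp only [Finset.mem_product, Finset.mem_Icc] at hp
    dsimp only
    split_ifs <;> simp only [Prod.mk.injEq, true_and, and_true] at * <;> omega

lemma comp_boundary_comp_d {Q : C} {n m : ℕ} (ε : Bool) (f : Q ⟶ X.X (n + 2)) (h1 : 1 ≤ m)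
    (h2 : m ≤ n + 1) :
    (f ≫ X.boundary (n + 1)) ≫ X.d n m ε =
      ∑ i ∈ Finset.Icc 1 m,
          ((-1 : ℤ) ^ (i + 1)) • ((f ≫ X.d (n + 1) (m + 1) ε) ≫ X.d n i false) +
      ∑ i ∈ Finset.Ioc m (n + 2),
          ((-1 : ℤ) ^ (i + 1)) • ((f ≫ X.d (n + 1) m ε) ≫ X.d n (i - 1) false) := by
  rw [comp_boundary, Preadditive.sum_comp,
    ← Finset.sum_Icc_one_add_sum_Ioc _ (by omega : m ≤ n + 2)]
  congr 1
  · refine Finset.sum_congr rfl fun i hi => ?_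
    rw [Finset.mem_Icc] at hi
    have hdd := X.dd n i (m + 1) false ε hi.1 (by omega) (by omega)
    rw [Nat.add_sub_cancel] at hdd
    rw [Preadditive.zsmul_comp, Category.assoc, Category.assoc, hdd]
  · refine Finset.sum_congr rfl fun i hi => ?_
    rw [Finset.mem_Ioc] at hi
    rw [Preadditive.zsmul_comp, Category.assoc, Category.assoc,
      X.dd n m i ε false h1 hi.1 hi.2]

namespace FacesVanishFrom

variable {Q : C} {n : ℕ} {ε : Bool} {k : ℕ} {a b : Q ⟶ X.X (n + 1)}

lemma add (ha : X.FacesVanishFrom ε k a) (hb : X.FacesVanishFrom ε k b) :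
    X.FacesVanishFrom ε k (a + b) := fun i h1 h2 => by
  rw [Preadditive.add_comp, ha i h1 h2, hb i h1 h2, add_zero]

lemma sub (ha : X.FacesVanishFrom ε k a) (hb : X.FacesVanishFrom ε k b) :
    X.FacesVanishFrom ε k (a - b) := fun i h1 h2 => by
  rw [Preadditive.sub_comp, ha i h1 h2, hb i h1 h2, sub_zero]

lemma zsmul (z : ℤ) (ha : X.FacesVanishFrom ε k a) : X.FacesVanishFrom ε k (z • a) :=
  fun i h1 h2 => by rw [Preadditive.zsmul_comp, ha i h1 h2, smul_zero]

lemma comp_boundary {f : Q ⟶ X.X (n + 2)} (hf : X.FacesVanishFrom true 1 f) :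
    X.FacesVanishFrom true 1 (f ≫ X.boundary (n + 1)) := fun m h1 h2 => by
  rw [X.comp_boundary_comp_d true f h1 h2, hf (m + 1) (by omega) (by omega), hf m h1 (by omega)]
  simp

end FacesVanishFrom

lemma sum_Icc_eq_zero_of_comp_boundary_eq_zero {Q : C} {n k : ℕ} {a : Q ⟶ X.X (n + 1)}
    (hk : k ≤ n + 1) (hcycle : a ≫ X.boundary n = 0) (ha : X.FacesVanishFrom false (k + 1) a) :
    ∑ i ∈ Finset.Icc 1 k, ((-1 : ℤ) ^ (i + 1)) • (a ≫ X.d n i false) = 0 := by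
  have hsum := comp_boundary a
  rw [hcycle, ← Finset.sum_Icc_one_add_sum_Ioc _ hk,
    Finset.sum_eq_zero (s := Finset.Ioc k (n + 1)), add_zero] at hsum
  · exact hsum.symm
  · intro i hi
    rw [Finset.mem_Ioc] at hi
    rw [ha i hi.1 hi.2, smul_zero]

end Precub

namespace PseudocubConn

variable {C : Type u} [Category.{v} C] (X : PseudocubConn C) {Q : C} {n k : ℕ}
  (a : Q ⟶ X.X (n + 1))

lemma comp_conn_d_false_self (hk1 : 1 ≤ k) (hk2 : k ≤ n + 1) :
    (a ≫ X.conn n k) ≫ X.d (n + 1) k false = a := by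
  rw [Category.assoc, (X.dconn_eq_zero n k hk1 hk2).1, Category.comp_id]

lemma comp_conn_d_false_succ (hk1 : 1 ≤ k) (hk2 : k ≤ n + 1) :
    (a ≫ X.conn n k) ≫ X.d (n + 1) (k + 1) false = a := by
  rw [Category.assoc, (X.dconn_eq_zero n k hk1 hk2).2, Category.comp_id]

variable [Preadditive C] {a}

lemma comp_conn_d_of_lt {i : ℕ} {ε : Bool} (hi : 1 ≤ i) (hik : i < k) (hk : k ≤ n + 1)
    (ha : a ≫ X.d n i ε = 0) : (a ≫ X.conn n k) ≫ X.d (n + 1) i ε = 0 := by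
  obtain ⟨n, rfl⟩ : ∃ m, n = m + 1 := ⟨n - 1, by omega⟩
  rw [Category.assoc, X.dconn_lt n i k ε hi hik (by omega), ← Category.assoc, ha, zero_comp]

lemma comp_conn_d_succ_of_lt {i : ℕ} {ε : Bool} (hk : 1 ≤ k) (hki : k < i) (hi : i ≤ n + 1)
    (ha : a ≫ X.d n i ε = 0) : (a ≫ X.conn n k) ≫ X.d (n + 1) (i + 1) ε = 0 := by
  obtain ⟨n, rfl⟩ : ∃ m, n = m + 1 := ⟨n - 1, by omega⟩
  rw [Category.assoc, X.dconn_gt n (i + 1) k ε hk (by omega) (by omega), Nat.add_sub_cancel,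
    ← Category.assoc, ha, zero_comp]

lemma facesVanishFrom_comp_conn (hk1 : 1 ≤ k) (hk2 : k ≤ n + 1)
    (ha : X.FacesVanishFrom true 1 a) : X.FacesVanishFrom true 1 (a ≫ X.conn n k) := by
  intro i hi1 hi2
  rcases lt_trichotomy i k with hik | rfl | hki
  · exact X.comp_conn_d_of_lt hi1 hik hk2 (ha i hi1 (by omega))
  · rw [Category.assoc, (X.dconn_eq_one n i hk1 hk2).1, ← Category.assoc, ha i hk1 hk2,
      zero_comp]
  · obtain ⟨i, rfl⟩ : ∃ j, i = j + 1 := ⟨i - 1, by omega⟩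
    obtain rfl | hki := eq_or_lt_of_le (Nat.le_of_lt_succ hki)
    · rw [Category.assoc, (X.dconn_eq_one n k hk1 hk2).2, ← Category.assoc, ha k hk1 hk2,
        zero_comp]
    · exact X.comp_conn_d_succ_of_lt hk1 hki (by omega) (ha i (by omega) (by omega))

lemma comp_conn_boundary_d_false_self (hk1 : 1 ≤ k) (hk2 : k ≤ n + 1)
    (hcycle : a ≫ X.boundary n = 0) (ha : X.FacesVanishFrom false (k + 1) a) :
    ((a ≫ X.conn n k) ≫ X.boundary (n + 1)) ≫ X.d n k false
      = ((-1 : ℤ) ^ k) • (a ≫ X.d n k false) := by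
  rw [Precub.comp_boundary_comp_d false _ hk1 hk2, X.comp_conn_d_false_succ a hk1 hk2,
    X.comp_conn_d_false_self a hk1 hk2,
    Precub.sum_Icc_eq_zero_of_comp_boundary_eq_zero hk2 hcycle ha, zero_add,
    Finset.sum_eq_single (k + 1)]
  · rw [Nat.add_sub_cancel, pow_succ, pow_succ]
    simp
  · intro i hi hne
    rw [Finset.mem_Ioc] at hi
    rw [ha (i - 1) (by omega) (by omega), smul_zero]
  · intro h
    exact absurd (Finset.mem_Ioc.2 ⟨by omega, by omega⟩) h

lemma facesVanishFrom_comp_conn_boundary (hk1 : 1 ≤ k) (hk2 : k ≤ n + 1)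
    (ha : X.FacesVanishFrom false (k + 1) a) :
    X.FacesVanishFrom false (k + 1) ((a ≫ X.conn n k) ≫ X.boundary (n + 1)) := by
  intro m hm1 hm2
  rw [Precub.comp_boundary_comp_d false _ (by omega) hm2,
    X.comp_conn_d_succ_of_lt hk1 (by omega) hm2 (ha m hm1 hm2)]
  simp only [zero_comp, smul_zero, Finset.sum_const_zero, zero_add]
  refine Finset.sum_eq_zero fun i hi => ?_
  rw [Finset.mem_Ioc] at hi
  obtain rfl | hm := eq_or_lt_of_le hm1
  · rw [X.comp_conn_d_false_succ a hk1 hk2, ha (i - 1) (by omega) (by omega), smul_zero]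
  · obtain ⟨m, rfl⟩ : ∃ j, m = j + 1 := ⟨m - 1, by omega⟩
    rw [X.comp_conn_d_succ_of_lt hk1 (by omega) (by omega) (ha m (by omega) (by omega)),
      zero_comp, smul_zero]

lemma exists_facesVanishFrom_sub_comp_boundary (hk1 : 1 ≤ k) (hk2 : k ≤ n + 1)
    (hN : X.FacesVanishFrom true 1 a) (hcycle : a ≫ X.boundary n = 0)
    (ha : X.FacesVanishFrom false (k + 1) a) :
    ∃ c : Q ⟶ X.X (n + 2), X.FacesVanishFrom true 1 c ∧
      X.FacesVanishFrom false k (a - c ≫ X.boundary (n + 1)) := by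
  refine ⟨((-1 : ℤ) ^ k) • (a ≫ X.conn n k), (X.facesVanishFrom_comp_conn hk1 hk2 hN).zsmul _,
    fun m hm1 hm2 => ?_⟩
  rw [Preadditive.sub_comp, Preadditive.zsmul_comp, Preadditive.zsmul_comp]
  obtain rfl | hm := eq_or_lt_of_le hm1
  · rw [X.comp_conn_boundary_d_false_self hk1 hk2 hcycle ha, smul_smul, ← pow_add,
      Even.neg_one_pow ⟨_, rfl⟩, one_smul, sub_self]
  · rw [X.facesVanishFrom_comp_conn_boundary hk1 hk2 ha m hm hm2, ha m hm hm2, smul_zero,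
      sub_zero]

lemma exists_facesVanishFrom_sub_comp_boundary_of_cycle (hN : X.FacesVanishFrom true 1 a)
    (hcycle : a ≫ X.boundary n = 0) :
    ∃ c : Q ⟶ X.X (n + 2), X.FacesVanishFrom true 1 c ∧
      X.FacesVanishFrom false 1 (a - c ≫ X.boundary (n + 1)) := by
  suffices h : ∀ t ≤ n + 1, ∃ c : Q ⟶ X.X (n + 2), X.FacesVanishFrom true 1 c ∧
      X.FacesVanishFrom false (n + 2 - t) (a - c ≫ X.boundary (n + 1)) by
    obtain ⟨c, hc, hac⟩ := h (n + 1) le_rfl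
    exact ⟨c, hc, fun i h1 h2 => hac i (by omega) h2⟩
  intro t
  induction t with
  | zero => exact fun _ => ⟨0, fun _ _ _ => zero_comp, fun _ _ h2 => absurd h2 (by omega)⟩
  | succ t ih =>
    intro ht
    obtain ⟨c, hc, hac⟩ := ih (by omega)
    have hcycle' : (a - c ≫ X.boundary (n + 1)) ≫ X.boundary n = 0 := by
      rw [Preadditive.sub_comp, hcycle, Category.assoc, Precub.boundary_comp_boundary,
        comp_zero, sub_zero]
    obtain ⟨c', hc', hac'⟩ := X.exists_facesVanishFrom_sub_comp_boundary (k := n + 1 - t)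
      (by omega) (by omega) (hN.sub hc.comp_boundary) hcycle'
      (fun i h1 h2 => hac i (by omega) h2)
    refine ⟨c + c', hc.add hc', fun i h1 h2 => ?_⟩
    rw [Preadditive.add_comp, ← sub_sub]
    exact hac' i (by omega) h2

end PseudocubConn

namespace KernelData

variable {C : Type u} [Category.{v} C] [Preadditive C] {X : Precub C} {A : C} {aug : X.X 0 ⟶ A}
  (KD : KernelData X aug) {P : C → Prop} {Q : C}

lemma exists_comp_boundary_eq_of_comp_aug_eq_zero (he : PEpi P (KD.e 0)) (hQ : P Q)
    (g : Q ⟶ X.X 0) (hg : g ≫ aug = 0) :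
    ∃ b : Q ⟶ X.X 1, X.FacesVanishFrom true 1 b ∧ b ≫ X.boundary 0 = g := by
  obtain ⟨l, ⟨hl₀, hl₁⟩, -⟩ := KD.pair_univ g 0 (by rw [hg, zero_comp])
  obtain ⟨b, hb⟩ := he Q hQ l
  refine ⟨b, fun i h1 h2 => ?_, ?_⟩
  · obtain rfl : i = 1 := by omega
    rw [← KD.e_k 0 1 true le_rfl le_rfl, ← Category.assoc, hb, hl₁]
  · rw [Precub.boundary_zero, ← KD.e_k 0 1 false le_rfl le_rfl, ← Category.assoc, hb, hl₀]

lemma exists_comp_boundary_eq_of_facesVanishFrom {n : ℕ} (he : PEpi P (KD.e (n + 1)))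
    (hQ : P Q) {a : Q ⟶ X.X (n + 1)} (h₀ : X.FacesVanishFrom false 1 a)
    (h₁ : X.FacesVanishFrom true 1 a) :
    ∃ b : Q ⟶ X.X (n + 2), X.FacesVanishFrom true 1 b ∧ b ≫ X.boundary (n + 1) = a := by
  let faces : ℕ → Bool → (Q ⟶ X.X (n + 1)) := fun i ε => if i = 1 ∧ ε = false then a else 0
  obtain ⟨l, hl, -⟩ := KD.ck_univ n faces (by
    intro i j ω α hi hij hj
    simp only [faces]
    rw [if_neg (by rintro ⟨rfl, -⟩; omega), zero_comp]
    split_ifs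
    · cases α
      exacts [(h₀ _ (by omega) (by omega)).symm, (h₁ _ (by omega) (by omega)).symm]
    · rw [zero_comp])
  obtain ⟨b, hb⟩ := he Q hQ l
  have hface : ∀ i ε, 1 ≤ i → i ≤ n + 2 → b ≫ X.d (n + 1) i ε = faces i ε :=
    fun i ε h1 h2 => by rw [← KD.e_k (n + 1) i ε h1 h2, ← Category.assoc, hb, hl i ε h1 h2]
  refine ⟨b, fun i h1 h2 => by simp [hface i true h1 h2, faces], ?_⟩
  rw [Precub.comp_boundary, Finset.sum_eq_single 1]
  · simp [hface 1 false le_rfl (by omega), faces]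
  · intro i hi hne
    rw [Finset.mem_Icc] at hi
    simp [hface i false hi.1 hi.2, faces, hne]
  · simp

end KernelData

namespace NormalizedData

variable {C : Type u} [Category.{v} C] [Abelian C] {X : Precub C} (ND : NormalizedData X)
  {Q : C}

lemma d_comp_ι (n : ℕ) : ND.K.d (n + 1) n ≫ ND.ι n = ND.ι (n + 1) ≫ X.boundary n :=
  ND.diff n

lemma facesVanishFrom_comp_ι {n : ℕ} (g : Q ⟶ ND.K.X (n + 1)) :
    X.FacesVanishFrom true 1 (g ≫ ND.ι (n + 1)) :=
  fun i h1 h2 => by rw [Category.assoc, ND.ι_ker n i h1 h2, comp_zero]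

lemma exists_comp_d_eq {n : ℕ} (g : Q ⟶ ND.K.X n) (b : Q ⟶ X.X (n + 1))
    (hb : X.FacesVanishFrom true 1 b) (hbg : b ≫ X.boundary n = g ≫ ND.ι n) :
    ∃ l : Q ⟶ ND.K.X (n + 1), l ≫ ND.K.d (n + 1) n = g := by
  obtain ⟨l, hl⟩ := ND.ι_lift n b hb
  have := ND.ι_mono n
  exact ⟨l, by rw [← cancel_mono (ND.ι n), Category.assoc, d_comp_ι, ← Category.assoc, hl, hbg]⟩

end NormalizedData

theorem stmt16_general {C : Type u} [Category.{v} C] [Abelian C] (P : C → Prop)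
    (X : PseudocubConn C) {A : C} (aug : X.X 0 ⟶ A)
    (haug : X.d 0 1 false ≫ aug = X.d 0 1 true ≫ aug)
    (KD : KernelData X.toPrecub aug)
    (hexact : PEpi P aug ∧ ∀ n, PEpi P (KD.e n))
    (ND : NormalizedData X.toPrecub) :
    (ND.K.d 1 0 ≫ ND.ι 0 ≫ aug = 0) ∧
    ∀ Q : C, P Q →
      (∀ g : Q ⟶ A, ∃ l : Q ⟶ ND.K.X 0, l ≫ ND.ι 0 ≫ aug = g) ∧
      (∀ g : Q ⟶ ND.K.X 0, g ≫ ND.ι 0 ≫ aug = 0 →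
        ∃ l : Q ⟶ ND.K.X 1, l ≫ ND.K.d 1 0 = g) ∧
      (∀ (n : ℕ) (g : Q ⟶ ND.K.X (n + 1)), g ≫ ND.K.d (n + 1) n = 0 →
        ∃ l : Q ⟶ ND.K.X (n + 2), l ≫ ND.K.d (n + 2) (n + 1) = g) := by
  refine ⟨?_, fun Q hQ => ⟨fun g => ?_, fun g hg => ?_, fun n g hg => ?_⟩⟩
  · rw [← Category.assoc, ND.d_comp_ι, Precub.boundary_zero, Category.assoc, haug,
      ← Category.assoc, ND.ι_ker 0 1 le_rfl le_rfl, zero_comp]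
  · obtain ⟨h, hh⟩ := hexact.1 Q hQ g
    obtain ⟨l, hl⟩ := ND.ι_lift₀ h
    exact ⟨l, by rw [← Category.assoc, hl, hh]⟩
  · obtain ⟨b, hb, hbg⟩ := KD.exists_comp_boundary_eq_of_comp_aug_eq_zero (hexact.2 0) hQ
      (g ≫ ND.ι 0) (by rwa [Category.assoc])
    exact ND.exists_comp_d_eq g b hb hbg
  · have hcycle : (g ≫ ND.ι (n + 1)) ≫ X.boundary n = 0 := by
      rw [Category.assoc, ← ND.d_comp_ι, ← Category.assoc, hg, zero_comp]
    obtain ⟨c, hc, hac⟩ :=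
      X.exists_facesVanishFrom_sub_comp_boundary_of_cycle (ND.facesVanishFrom_comp_ι g) hcycle
    obtain ⟨b, hb, hba⟩ := KD.exists_comp_boundary_eq_of_facesVanishFrom (hexact.2 (n + 1)) hQ
      hac ((ND.facesVanishFrom_comp_ι g).sub hc.comp_boundary)
    exact ND.exists_comp_d_eq g (b + c) (hb.add hc)
      (by rw [Preadditive.add_comp, hba, sub_add_cancel])

/-- Data exhibiting `K` as the Moore chain complex `M(X)` of a precubical object `X`
in an abelian category. -/
theorem stmt16 {C : Type u} [Category.{v} C] [Abelian C] (P : C → Prop)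
    (hP : IsProjectiveClass P)
    (X : PseudocubConn C) {A : C} (aug : X.X 0 ⟶ A)
    (haug : X.d 0 1 false ≫ aug = X.d 0 1 true ≫ aug)
    (KD : KernelData X.toPrecub aug)
    (hexact : PEpi P aug ∧ ∀ n, PEpi P (KD.e n))
    (ND : NormalizedData X.toPrecub) :
    (ND.K.d 1 0 ≫ ND.ι 0 ≫ aug = 0) ∧
    ∀ Q : C, P Q →
      (∀ g : Q ⟶ A, ∃ l : Q ⟶ ND.K.X 0, l ≫ ND.ι 0 ≫ aug = g) ∧
      (∀ g : Q ⟶ ND.K.X 0, g ≫ ND.ι 0 ≫ aug = 0 →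
        ∃ l : Q ⟶ ND.K.X 1, l ≫ ND.K.d 1 0 = g) ∧
      (∀ (n : ℕ) (g : Q ⟶ ND.K.X (n + 1)), g ≫ ND.K.d (n + 1) n = 0 →
        ∃ l : Q ⟶ ND.K.X (n + 2), l ≫ ND.K.d (n + 2) (n + 1) = g) :=
  stmt16_general P X aug haug KD hexact ND
end
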